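/- Let A = K[[f_1,…,f_s]] ⊆ F = K[[x_1,…,x_n]] with the length of F/A as an A-module finite. Then there exists a finite partition P of (ℝ_{>0})^n such that every member σ of P is convex and closed under multiplication by positive real scalars, and for each σ ∈ P both maps a ↦ exp(A,a) and a ↦ in(A,a) are constant on σ. -/

import Mathlib

/-! Since `F/A` has finite length it is an artinian `A`-module, so the images of the powers
`𝔪^k` of the maximal ideal in `F/A` stabilise; as `A` is adically closed this yields an `N`
such that `A` contains every series of order `≥ N`. Truncating `f ∈ A` below degree `N` then
stays inside `A`, so `in(f,a)` and `exp(f,a)` only depend, modulo series of order `≥ N`, on how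
`a` orders the weights of the finitely many exponents of degree `< N`. The fibres of this weight
pattern over the positive orthant form the fan: each is cut out by finitely many homogeneous
linear inequalities, strict or not, hence is a convex cone. -/

noncomputable section

namespace CanonicalFan

open MvPowerSeries

variable (K : Type*) [Field K] (n : ℕ)

/-- The weight `⟨a, α⟩ = ∑ i, a i * α i` of an exponent `α` with respect to `a`. -/
def weight (a : Fin n → ℝ) (α : Fin n →₀ ℕ) : ℝ := ∑ i, a i * (α i : ℝ)

/-- The support of a formal power series. -/
def supp (f : MvPowerSeries (Fin n) K) : Set (Fin n →₀ ℕ) :=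
  {α | MvPowerSeries.coeff α f ≠ 0}

/-- The `a`-valuation `ν(f,a)`, with the convention `ν(0,a) = +∞`. -/
def nu (a : Fin n → ℝ) (f : MvPowerSeries (Fin n) K) : EReal :=
  sInf ((fun α => ((weight n a α : ℝ) : EReal)) '' supp K n f)

open Classical in
/-- The `a`-initial form `in(f,a)` of a power series. -/
def initialForm (a : Fin n → ℝ) (f : MvPowerSeries (Fin n) K) :
    MvPowerSeries (Fin n) K :=
  fun α => if ((weight n a α : ℝ) : EReal) = nu K n a f then MvPowerSeries.coeff α f else 0

open Classical in
/-- `exp(f,a)`: the `≺`-maximal element of the support of `in(f,a)`, where `≺` is the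
well-ordering `r` (junk value `0` if no maximal element exists). -/
def exponent (r : (Fin n →₀ ℕ) → (Fin n →₀ ℕ) → Prop) (a : Fin n → ℝ)
    (f : MvPowerSeries (Fin n) K) : Fin n →₀ ℕ :=
  if h : ∃ β ∈ supp K n (initialForm K n a f),
      ∀ γ ∈ supp K n (initialForm K n a f), γ = β ∨ r γ β
  then h.choose else 0

/-- The `a`-leading monomial `M(f,a) = c_{exp(f,a)} x^{exp(f,a)}`. -/
def leadMon (r : (Fin n →₀ ℕ) → (Fin n →₀ ℕ) → Prop) (a : Fin n → ℝ)
    (f : MvPowerSeries (Fin n) K) : MvPowerSeries (Fin n) K :=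
  MvPowerSeries.monomial (exponent K n r a f)
    (MvPowerSeries.coeff (exponent K n r a f) f)

/-- The maximal ideal `(x_1, …, x_n)` of `K[[x_1,…,x_n]]`. -/
def mIdeal : Ideal (MvPowerSeries (Fin n) K) :=
  Ideal.span (Set.range (MvPowerSeries.X : Fin n → MvPowerSeries (Fin n) K))

/-- `K[[S]]`: the smallest `K`-subalgebra of `K[[x_1,…,x_n]]` containing `S` and closed in
the `(x_1,…,x_n)`-adic topology; concretely, the adic closure of `Algebra.adjoin K S`. -/
def closedAdjoin (S : Set (MvPowerSeries (Fin n) K)) :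
    Subalgebra K (MvPowerSeries (Fin n) K) where
  carrier := {f | ∀ N : ℕ, ∃ g ∈ Algebra.adjoin K S, f - g ∈ (mIdeal K n) ^ N}
  algebraMap_mem' c N :=
    ⟨algebraMap K _ c, Subalgebra.algebraMap_mem _ c, by simp [Ideal.zero_mem]⟩
  add_mem' {f g} hf hg N := by
    obtain ⟨p, hp, hfp⟩ := hf N
    obtain ⟨q, hq, hgq⟩ := hg N
    exact ⟨p + q, add_mem hp hq, by simpa [add_sub_add_comm] using Ideal.add_mem _ hfp hgq⟩
  mul_mem' {f g} hf hg N := by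
    obtain ⟨p, hp, hfp⟩ := hf N
    obtain ⟨q, hq, hgq⟩ := hg N
    refine ⟨p * q, mul_mem hp hq, ?_⟩
    have h : f * g - p * q = f * (g - q) + (f - p) * q := by ring
    rw [h]
    exact Ideal.add_mem _ (Ideal.mul_mem_left _ _ hgq) (Ideal.mul_mem_right _ _ hfp)

/-- `exp(A,a) = {exp(f,a) : f ∈ A, f ≠ 0}`. -/
def expSet (r : (Fin n →₀ ℕ) → (Fin n →₀ ℕ) → Prop) (a : Fin n → ℝ)
    (A : Set (MvPowerSeries (Fin n) K)) : Set (Fin n →₀ ℕ) :=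
  {β | ∃ f ∈ A, f ≠ 0 ∧ exponent K n r a f = β}

/-- `in(A,a) = K[[in(f,a) : f ∈ A ∖ {0}]]`. -/
def inAlgebra (a : Fin n → ℝ) (A : Set (MvPowerSeries (Fin n) K)) :
    Subalgebra K (MvPowerSeries (Fin n) K) :=
  closedAdjoin K n {g | ∃ f ∈ A, f ≠ 0 ∧ initialForm K n a f = g}

/-- `M(A,a) = K[[M(f,a) : f ∈ A ∖ {0}]]`. -/
def leadAlgebra (r : (Fin n →₀ ℕ) → (Fin n →₀ ℕ) → Prop) (a : Fin n → ℝ)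
    (A : Set (MvPowerSeries (Fin n) K)) : Subalgebra K (MvPowerSeries (Fin n) K) :=
  closedAdjoin K n {g | ∃ f ∈ A, f ≠ 0 ∧ leadMon K n r a f = g}

set_option synthInstance.maxHeartbeats 1000000 in
/-- The length of `F/A` as an `A`-module is finite. -/
def FiniteColength (A : Subalgebra K (MvPowerSeries (Fin n) K)) : Prop :=
  IsFiniteLength A
    (MvPowerSeries (Fin n) K ⧸ LinearMap.range (Algebra.linearMap A (MvPowerSeries (Fin n) K)))

/-- `{g_1,…,g_r}` is an `a`-canonical basis of `A`. -/
def IsCanonicalBasis (r : (Fin n →₀ ℕ) → (Fin n →₀ ℕ) → Prop) (a : Fin n → ℝ)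
    (A : Subalgebra K (MvPowerSeries (Fin n) K)) {m : ℕ}
    (g : Fin m → MvPowerSeries (Fin n) K) : Prop :=
  (∀ i, g i ∈ A ∧ g i ≠ 0) ∧
    leadAlgebra K n r a (A : Set (MvPowerSeries (Fin n) K)) =
      closedAdjoin K n (Set.range fun i => leadMon K n r a (g i))

/-- `{g_1,…,g_r}` is a minimal `a`-canonical basis of `A`. -/
def IsMinimalCanonicalBasis (r : (Fin n →₀ ℕ) → (Fin n →₀ ℕ) → Prop) (a : Fin n → ℝ)
    (A : Subalgebra K (MvPowerSeries (Fin n) K)) {m : ℕ}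
    (g : Fin m → MvPowerSeries (Fin n) K) : Prop :=
  IsCanonicalBasis K n r a A g ∧
    ∀ T : Set (MvPowerSeries (Fin n) K),
      T ⊂ Set.range (fun i => leadMon K n r a (g i)) →
        closedAdjoin K n T ≠ leadAlgebra K n r a (A : Set (MvPowerSeries (Fin n) K))

/-- `{g_1,…,g_r}` is the `a`-reduced canonical basis of `A`. -/
def IsReducedCanonicalBasis (r : (Fin n →₀ ℕ) → (Fin n →₀ ℕ) → Prop) (a : Fin n → ℝ)
    (A : Subalgebra K (MvPowerSeries (Fin n) K)) {m : ℕ}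
    (g : Fin m → MvPowerSeries (Fin n) K) : Prop :=
  IsMinimalCanonicalBasis K n r a A g ∧
    (∀ i, MvPowerSeries.coeff (exponent K n r a (g i)) (g i) = 1) ∧
    ∀ i, ∀ α ∈ supp K n (g i - leadMon K n r a (g i)),
      (MvPowerSeries.monomial α (1 : K)) ∉
        closedAdjoin K n (Set.range fun j => leadMon K n r a (g j))

/-- A power series is a (nonzero) monomial. -/
def IsMonomial (g : MvPowerSeries (Fin n) K) : Prop :=
  ∃ (α : Fin n →₀ ℕ) (c : K), c ≠ 0 ∧ g = MvPowerSeries.monomial α c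


section

variable {K n}

theorem exists_max_of_isWellOrder {α : Type*} (r : α → α → Prop) [IsWellOrder α r]
    {s : Set α} (hs : s.Finite) (hne : s.Nonempty) : ∃ β ∈ s, ∀ γ ∈ s, γ = β ∨ r γ β := by
  obtain ⟨β, hβ, hmax⟩ := Set.exists_max_image s (Ordinal.typein r) hs hne
  refine ⟨β, hβ, fun γ hγ => ?_⟩
  have := (Ordinal.typein_le_typein r).mp (hmax γ hγ)
  rcases trichotomous_of r γ β with h | h | h
  · exact Or.inr h
  · exact Or.inl h
  · exact absurd h this

theorem weight_smul (t : ℝ) (a : Fin n → ℝ) (α : Fin n →₀ ℕ) :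
    weight n (t • a) α = t * weight n a α := by
  simp [weight, Finset.mul_sum, mul_assoc]

theorem isLinearMap_weight_sub (α β : Fin n →₀ ℕ) :
    IsLinearMap ℝ fun a => weight n a α - weight n a β :=
  ⟨fun a b => by simp only [weight, Pi.add_apply, add_mul, Finset.sum_add_distrib]; ring,
    fun t a => by simp only [weight_smul, smul_eq_mul, mul_sub]⟩

theorem finite_setOf_weight_le {a : Fin n → ℝ} (ha : ∀ i, 0 < a i) (C : ℝ) :
    {α : Fin n →₀ ℕ | weight n a α ≤ C}.Finite := by
  refine (Set.finite_Iic (Finsupp.equivFunOnFinite.symm fun i => ⌈C / a i⌉₊)).subset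
    fun α hα i => ?_
  have hi : a i * α i ≤ C :=
    (Finset.single_le_sum (fun j _ => mul_nonneg (ha j).le (Nat.cast_nonneg (α j)))
      (Finset.mem_univ i)).trans hα
  simpa using Nat.cast_le.mp (((le_div_iff₀' (ha i)).mpr hi).trans (Nat.le_ceil _))

theorem coeff_initialForm (a : Fin n → ℝ) (f : MvPowerSeries (Fin n) K) (α : Fin n →₀ ℕ) :
    coeff α (initialForm K n a f) =
      if ((weight n a α : ℝ) : EReal) = nu K n a f then coeff α f else 0 :=
  rfl

theorem weight_eq_nu_iff {a : Fin n → ℝ} {f : MvPowerSeries (Fin n) K} {α : Fin n →₀ ℕ}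
    (hα : α ∈ supp K n f) :
    ((weight n a α : ℝ) : EReal) = nu K n a f ↔ ∀ γ ∈ supp K n f, weight n a α ≤ weight n a γ :=
  ⟨fun h γ hγ => EReal.coe_le_coe_iff.mp (h ▸ sInf_le ⟨γ, hγ, rfl⟩),
    fun h => le_antisymm (le_sInf <| by
      rintro _ ⟨γ, hγ, rfl⟩
      exact EReal.coe_le_coe_iff.mpr (h γ hγ)) (sInf_le ⟨α, hα, rfl⟩)⟩

theorem mem_supp_initialForm_iff {a : Fin n → ℝ} {f : MvPowerSeries (Fin n) K}
    {α : Fin n →₀ ℕ} :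
    α ∈ supp K n (initialForm K n a f) ↔
      α ∈ supp K n f ∧ ∀ γ ∈ supp K n f, weight n a α ≤ weight n a γ := by
  change coeff α (initialForm K n a f) ≠ 0 ↔ _
  rw [coeff_initialForm]
  split_ifs with h
  · exact ⟨fun hα => ⟨hα, (weight_eq_nu_iff hα).mp h⟩, fun h' => h'.1⟩
  · exact ⟨fun h0 => absurd rfl h0, fun ⟨hα, hmin⟩ => absurd ((weight_eq_nu_iff hα).mpr hmin) h⟩

theorem supp_initialForm_subset (a : Fin n → ℝ) (f : MvPowerSeries (Fin n) K) :
    supp K n (initialForm K n a f) ⊆ supp K n f :=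
  fun _ h => (mem_supp_initialForm_iff.mp h).1

theorem supp_initialForm_finite {a : Fin n → ℝ} (ha : ∀ i, 0 < a i)
    (f : MvPowerSeries (Fin n) K) : (supp K n (initialForm K n a f)).Finite := by
  rcases (supp K n (initialForm K n a f)).eq_empty_or_nonempty with h | ⟨α, hα⟩
  · exact h ▸ Set.finite_empty
  refine (finite_setOf_weight_le ha (weight n a α)).subset fun γ hγ => ?_
  exact (mem_supp_initialForm_iff.mp hγ).2 α (mem_supp_initialForm_iff.mp hα).1

theorem supp_initialForm_nonempty {a : Fin n → ℝ} (ha : ∀ i, 0 < a i)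
    {f : MvPowerSeries (Fin n) K} (hf : f ≠ 0) : (supp K n (initialForm K n a f)).Nonempty := by
  obtain ⟨α, hα⟩ : (supp K n f).Nonempty := by
    by_contra h
    refine hf (MvPowerSeries.ext fun α => ?_)
    simpa using (not_not.mp fun hα => h ⟨α, hα⟩ : coeff α f = 0)
  obtain ⟨α₀, ⟨hα₀, -⟩, hmin⟩ :=
    Set.exists_min_image (supp K n f ∩ {γ | weight n a γ ≤ weight n a α}) (weight n a)
      ((finite_setOf_weight_le ha _).inter_of_right _) ⟨α, hα, le_refl (weight n a α)⟩
  refine ⟨α₀, mem_supp_initialForm_iff.mpr ⟨hα₀, fun γ hγ => ?_⟩⟩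
  by_cases hγα : weight n a γ ≤ weight n a α
  · exact hmin γ ⟨hγ, hγα⟩
  · exact (hmin α ⟨hα, le_refl (weight n a α)⟩).trans (le_of_not_ge hγα)

theorem ne_zero_of_mem_supp {f : MvPowerSeries (Fin n) K} {α : Fin n →₀ ℕ}
    (h : α ∈ supp K n f) : f ≠ 0 :=
  fun hf => h (by rw [hf, map_zero])

theorem supp_monomial {α : Fin n →₀ ℕ} {c : K} (hc : c ≠ 0) :
    supp K n (monomial α c) = {α} := by
  classical
  ext β
  by_cases hβ : β = α <;> simp [supp, coeff_monomial, hβ, hc]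

theorem initialForm_monomial (a : Fin n → ℝ) (α : Fin n →₀ ℕ) (c : K) :
    initialForm K n a (monomial α c) = monomial α c := by
  classical
  rcases eq_or_ne c 0 with rfl | hc
  · ext β
    simp [coeff_initialForm]
  have hα : α ∈ supp K n (monomial α c) := by simp [supp_monomial hc]
  have hν := (weight_eq_nu_iff (a := a) hα).mpr fun γ hγ => by
    rw [supp_monomial hc, Set.mem_singleton_iff] at hγ
    rw [hγ]
  ext β
  by_cases hβ : β = α
  · subst hβ
    simp [coeff_initialForm, hν]
  · simp [coeff_initialForm, coeff_monomial, hβ]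

section

variable (r : (Fin n →₀ ℕ) → (Fin n →₀ ℕ) → Prop)

theorem exponent_eq_of_initialForm_eq {a b : Fin n → ℝ} {f g : MvPowerSeries (Fin n) K}
    (h : initialForm K n a f = initialForm K n b g) :
    exponent K n r a f = exponent K n r b g := by
  unfold exponent
  rw [h]

variable [IsWellOrder (Fin n →₀ ℕ) r]

theorem exponent_eq_of_isMax {a : Fin n → ℝ} {f : MvPowerSeries (Fin n) K} {β : Fin n →₀ ℕ}
    (hβ : β ∈ supp K n (initialForm K n a f))
    (hmax : ∀ γ ∈ supp K n (initialForm K n a f), γ = β ∨ r γ β) :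
    exponent K n r a f = β := by
  have h : ∃ β ∈ supp K n (initialForm K n a f),
      ∀ γ ∈ supp K n (initialForm K n a f), γ = β ∨ r γ β := ⟨β, hβ, hmax⟩
  rw [exponent, dif_pos h]
  obtain ⟨hβ', hmax'⟩ := h.choose_spec
  rcases hmax' β hβ with h1 | h1
  · exact h1.symm
  · rcases hmax _ hβ' with h2 | h2
    · exact h2
    · exact absurd h1 (asymm h2)

theorem exponent_spec {a : Fin n → ℝ} (ha : ∀ i, 0 < a i) {f : MvPowerSeries (Fin n) K}
    (hf : f ≠ 0) :
    exponent K n r a f ∈ supp K n (initialForm K n a f) ∧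
      ∀ γ ∈ supp K n (initialForm K n a f), γ = exponent K n r a f ∨ r γ (exponent K n r a f) := by
  obtain ⟨β, hβ, hmax⟩ := exists_max_of_isWellOrder r (supp_initialForm_finite ha f)
    (supp_initialForm_nonempty ha hf)
  rw [exponent_eq_of_isMax r hβ hmax]
  exact ⟨hβ, hmax⟩

theorem exponent_monomial (a : Fin n → ℝ) (α : Fin n →₀ ℕ) {c : K} (hc : c ≠ 0) :
    exponent K n r a (monomial α c) = α := by
  have hsupp : supp K n (initialForm K n a (monomial α c)) = {α} := by
    rw [initialForm_monomial, supp_monomial hc]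
  exact exponent_eq_of_isMax r (hsupp ▸ rfl) fun γ hγ =>
    Or.inl (Set.mem_singleton_iff.mp (hsupp ▸ hγ))

end

theorem monomial_one_mem_mIdeal_pow (β : Fin n →₀ ℕ) :
    monomial β (1 : K) ∈ mIdeal K n ^ β.degree := by
  rw [monomial_one_eq, Finsupp.prod, Finsupp.degree_apply, ← Finset.prod_pow_eq_pow_sum]
  exact Ideal.prod_mem_prod fun i _ =>
    Ideal.pow_mem_pow (Ideal.subset_span (Set.mem_range_self i)) _

theorem mem_mIdeal_pow_of_le_order {k : ℕ} {f : MvPowerSeries (Fin n) K}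
    (hf : (k : ℕ∞) ≤ f.order) : f ∈ mIdeal K n ^ k := by
  classical
  choose! χ hχ_le hχ_degree using fun α : Fin n →₀ ℕ => Finsupp.exists_le_degree_eq α k
  let B := (Finsupp.finite_of_degree_lt (σ := Fin n) (k + 1)).toFinset.filter (·.degree = k)
  -- Each exponent of degree `≥ k` is charged to a divisor `χ α` of degree exactly `k`;
  -- grouping the terms of `f` accordingly writes `f = ∑_{deg β = k} x^β * h β`.
  let h : (Fin n →₀ ℕ) → MvPowerSeries (Fin n) K := fun β γ =>
    if k ≤ (γ + β).degree ∧ χ (γ + β) = β then coeff (γ + β) f else 0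
  have hf_eq : f = ∑ β ∈ B, monomial β 1 * h β := by
    ext α
    have hterm : ∀ β, coeff α (monomial β 1 * h β) =
        if k ≤ α.degree ∧ χ α = β then coeff α f else 0 := by
      intro β
      rw [coeff_monomial_mul, one_mul]
      by_cases hβα : β ≤ α
      · rw [if_pos hβα]
        change ite _ _ _ = _
        rw [tsub_add_cancel_of_le hβα]
      · rw [if_neg hβα, if_neg]
        rintro ⟨hk, rfl⟩
        exact hβα (hχ_le α hk)
    rw [map_sum, Finset.sum_congr rfl fun β _ => hterm β]
    by_cases hk : k ≤ α.degree
    · have hχB : χ α ∈ B := by simp [B, hχ_degree α hk]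
      simp [hk, hχB]
    · simp only [hk, false_and, if_false, Finset.sum_const_zero]
      exact coeff_of_lt_order (hf.trans_lt' (by exact_mod_cast not_le.mp hk))
  rw [hf_eq]
  refine Ideal.sum_mem _ fun β hβ => Ideal.mul_mem_right _ _ ?_
  simpa [(Finset.mem_filter.mp hβ).2] using monomial_one_mem_mIdeal_pow (K := K) β

theorem le_order_sub_truncTotal (N : ℕ) (f : MvPowerSeries (Fin n) K) :
    (N : ℕ∞) ≤ (f - truncTotal N f).order := by
  refine le_order fun α hα => ?_
  rw [map_sub, MvPolynomial.coeff_coe, coeff_truncTotal _ (by exact_mod_cast hα), sub_self]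

theorem subset_closedAdjoin (S : Set (MvPowerSeries (Fin n) K)) :
    S ⊆ closedAdjoin K n S :=
  fun g hg _ => ⟨g, Algebra.subset_adjoin hg, by rw [sub_self]; exact zero_mem _⟩

theorem mem_closedAdjoin_of_forall_sub_mem {S : Set (MvPowerSeries (Fin n) K)}
    {f : MvPowerSeries (Fin n) K}
    (h : ∀ M : ℕ, ∃ g ∈ closedAdjoin K n S, f - g ∈ mIdeal K n ^ M) :
    f ∈ closedAdjoin K n S := fun M => by
  obtain ⟨g, hg, hfg⟩ := h M
  obtain ⟨p, hp, hgp⟩ := hg M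
  exact ⟨p, hp, by simpa using add_mem hfg hgp⟩

theorem closedAdjoin_le_of_subset {S T : Set (MvPowerSeries (Fin n) K)}
    (h : S ⊆ closedAdjoin K n T) : closedAdjoin K n S ≤ closedAdjoin K n T :=
  fun _ hf => mem_closedAdjoin_of_forall_sub_mem fun M => by
    obtain ⟨p, hp, hfp⟩ := hf M
    exact ⟨p, Algebra.adjoin_le h hp, hfp⟩

theorem mem_closedAdjoin_of_le_order {S : Set (MvPowerSeries (Fin n) K)} {N : ℕ}
    (hS : ∀ α : Fin n →₀ ℕ, N ≤ α.degree → monomial α 1 ∈ S) {f : MvPowerSeries (Fin n) K}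
    (hf : (N : ℕ∞) ≤ f.order) : f ∈ closedAdjoin K n S := fun M => by
  refine ⟨truncTotal M f, ?_, mem_mIdeal_pow_of_le_order (le_order_sub_truncTotal M f)⟩
  rw [(truncTotal M f).as_sum, ← MvPolynomial.coeToMvPowerSeries.ringHom_apply, map_sum]
  refine Subalgebra.sum_mem _ fun α hα => ?_
  have hαN : N ≤ α.degree := by
    by_contra hlt
    refine MvPolynomial.mem_support_iff.mp hα ?_
    rw [coeff_truncTotal_eq_ite,
      coeff_of_lt_order (hf.trans_lt' (by exact_mod_cast not_le.mp hlt)), ite_self]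
  rw [MvPolynomial.coeToMvPowerSeries.ringHom_apply, MvPolynomial.coe_monomial,
    ← mul_one (MvPolynomial.coeff α _), ← smul_eq_mul, map_smul]
  exact Subalgebra.smul_mem _ (Algebra.subset_adjoin (hS α hαN)) _

theorem exists_forall_le_order_mem_closedAdjoin {S : Set (MvPowerSeries (Fin n) K)}
    (hlen : FiniteColength K n (closedAdjoin K n S)) :
    ∃ N : ℕ, ∀ f : MvPowerSeries (Fin n) K, (N : ℕ∞) ≤ f.order → f ∈ closedAdjoin K n S := by
  set A := closedAdjoin K n S
  set R := LinearMap.range (Algebra.linearMap A (MvPowerSeries (Fin n) K))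
  have : IsArtinian A (MvPowerSeries (Fin n) K ⧸ R) :=
    (isFiniteLength_iff_isNoetherian_isArtinian.mp hlen).2
  let J : ℕ → Submodule A (MvPowerSeries (Fin n) K ⧸ R) :=
    fun k => ((mIdeal K n ^ k).restrictScalars A).map R.mkQ
  obtain ⟨N, hN⟩ := IsArtinian.monotone_stabilizes
    ⟨OrderDual.toDual ∘ J, fun k l hkl => Submodule.map_mono (Ideal.pow_le_pow_right hkl)⟩
  refine ⟨N, fun f hf => mem_closedAdjoin_of_forall_sub_mem fun M => ?_⟩
  have hstab : J N = J (max M N) := hN _ (le_max_right M N)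
  obtain ⟨h, hh, hfh⟩ : R.mkQ f ∈ J (max M N) :=
    hstab ▸ ⟨f, mem_mIdeal_pow_of_le_order hf, rfl⟩
  obtain ⟨a, ha⟩ := (Submodule.Quotient.eq R).mp hfh.symm
  have ha' : (a : MvPowerSeries (Fin n) K) = f - h := ha
  refine ⟨a, a.2, ?_⟩
  rw [ha', sub_sub_cancel]
  exact Ideal.pow_le_pow_right (le_max_left M N) hh

theorem mem_supp_truncTotal_iff {N : ℕ} {f : MvPowerSeries (Fin n) K} {α : Fin n →₀ ℕ} :
    α ∈ supp K n (truncTotal N f) ↔ α ∈ supp K n f ∧ α.degree < N := by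
  change coeff α (truncTotal N f : MvPowerSeries (Fin n) K) ≠ 0 ↔ coeff α f ≠ 0 ∧ _
  rw [MvPolynomial.coeff_coe, coeff_truncTotal_eq_ite]
  split_ifs with h <;> simp [h]

theorem initialForm_truncTotal {a : Fin n → ℝ} {f : MvPowerSeries (Fin n) K} {N : ℕ}
    {β : Fin n →₀ ℕ} (hβ : β ∈ supp K n (initialForm K n a f)) (hβN : β.degree < N) :
    initialForm K n a (truncTotal N f) = truncTotal N (initialForm K n a f) := by
  obtain ⟨hβf, hβmin⟩ := mem_supp_initialForm_iff.mp hβ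
  have hβp : β ∈ supp K n (truncTotal N f) := mem_supp_truncTotal_iff.mpr ⟨hβf, hβN⟩
  have hν : nu K n a (truncTotal N f) = nu K n a f :=
    le_antisymm ((sInf_le (Set.mem_image_of_mem _ hβp)).trans_eq ((weight_eq_nu_iff hβf).mpr hβmin))
      (sInf_le_sInf (Set.image_mono fun _ hα => (mem_supp_truncTotal_iff.mp hα).1))
  ext α
  simp only [coeff_initialForm, MvPolynomial.coeff_coe, coeff_truncTotal_eq_ite, hν]
  split_ifs <;> rfl

def weightPattern (N : ℕ) (a : Fin n → ℝ) (α β : {α : Fin n →₀ ℕ // α.degree < N}) : Prop :=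
  weight n a α ≤ weight n a β

theorem weight_le_weight_iff_of_weightPattern_eq {N : ℕ} {a b : Fin n → ℝ}
    (h : weightPattern N a = weightPattern N b) {α β : Fin n →₀ ℕ} (hα : α.degree < N)
    (hβ : β.degree < N) : weight n a α ≤ weight n a β ↔ weight n b α ≤ weight n b β :=
  iff_of_eq (congrFun (congrFun h ⟨α, hα⟩) ⟨β, hβ⟩)

theorem initialForm_eq_of_weightPattern_eq {N : ℕ} {a b : Fin n → ℝ}
    (h : weightPattern N a = weightPattern N b) {p : MvPowerSeries (Fin n) K}
    (hp : ∀ α ∈ supp K n p, α.degree < N) : initialForm K n a p = initialForm K n b p := by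
  ext α
  rw [coeff_initialForm, coeff_initialForm]
  by_cases hα : α ∈ supp K n p
  · refine if_congr ?_ rfl rfl
    rw [weight_eq_nu_iff hα, weight_eq_nu_iff hα]
    exact forall₂_congr fun γ hγ =>
      weight_le_weight_iff_of_weightPattern_eq h (hp α hα) (hp γ hγ)
  · rw [not_not.mp hα, ite_self, ite_self]

section

variable {A : Subalgebra K (MvPowerSeries (Fin n) K)} {N : ℕ}

theorem truncTotal_mem (hA : ∀ f : MvPowerSeries (Fin n) K, (N : ℕ∞) ≤ f.order → f ∈ A)
    {f : MvPowerSeries (Fin n) K} (hf : f ∈ A) : (truncTotal N f : MvPowerSeries (Fin n) K) ∈ A :=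
  sub_sub_cancel f (truncTotal N f : MvPowerSeries (Fin n) K) ▸
    sub_mem hf (hA _ (le_order_sub_truncTotal N f))

theorem monomial_one_mem (hA : ∀ f : MvPowerSeries (Fin n) K, (N : ℕ∞) ≤ f.order → f ∈ A)
    {α : Fin n →₀ ℕ} (hα : N ≤ α.degree) : monomial α (1 : K) ∈ A :=
  hA _ (by rw [order_monomial_of_ne_zero one_ne_zero]; exact_mod_cast hα)

variable {a b : Fin n → ℝ}

theorem expSet_subset_of_weightPattern_eq (r : (Fin n →₀ ℕ) → (Fin n →₀ ℕ) → Prop)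
    [IsWellOrder (Fin n →₀ ℕ) r]
    (hA : ∀ f : MvPowerSeries (Fin n) K, (N : ℕ∞) ≤ f.order → f ∈ A) (ha : ∀ i, 0 < a i)
    (h : weightPattern N a = weightPattern N b) : expSet K n r a A ⊆ expSet K n r b A := by
  rintro _ ⟨f, hfA, hf0, rfl⟩
  obtain ⟨hβ, hβmax⟩ := exponent_spec r ha hf0
  set β := exponent K n r a f
  by_cases hβN : N ≤ β.degree
  · have hβ1 : β ∈ supp K n (monomial β (1 : K)) := by simp [supp_monomial]
    exact ⟨monomial β 1, monomial_one_mem hA hβN, ne_zero_of_mem_supp hβ1,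
      exponent_monomial r b β one_ne_zero⟩
  set p : MvPowerSeries (Fin n) K := ↑(truncTotal N f)
  have hinit : initialForm K n a p = truncTotal N (initialForm K n a f) :=
    initialForm_truncTotal hβ (not_le.mp hβN)
  have hβp : β ∈ supp K n (initialForm K n a p) :=
    hinit ▸ mem_supp_truncTotal_iff.mpr ⟨hβ, not_le.mp hβN⟩
  refine ⟨p, truncTotal_mem hA hfA, ne_zero_of_mem_supp (supp_initialForm_subset a p hβp), ?_⟩
  rw [← exponent_eq_of_initialForm_eq r
    (initialForm_eq_of_weightPattern_eq h fun α hα => (mem_supp_truncTotal_iff.mp hα).2)]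
  refine exponent_eq_of_isMax r hβp fun γ hγ => hβmax γ ?_
  rw [hinit] at hγ
  exact (mem_supp_truncTotal_iff.mp hγ).1

theorem expSet_eq_of_weightPattern_eq (r : (Fin n →₀ ℕ) → (Fin n →₀ ℕ) → Prop)
    [IsWellOrder (Fin n →₀ ℕ) r]
    (hA : ∀ f : MvPowerSeries (Fin n) K, (N : ℕ∞) ≤ f.order → f ∈ A) (ha : ∀ i, 0 < a i)
    (hb : ∀ i, 0 < b i) (h : weightPattern N a = weightPattern N b) :
    expSet K n r a A = expSet K n r b A :=
  (expSet_subset_of_weightPattern_eq r hA ha h).antisymm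
    (expSet_subset_of_weightPattern_eq r hA hb h.symm)

theorem initialForm_mem_inAlgebra_of_weightPattern_eq
    (hA : ∀ f : MvPowerSeries (Fin n) K, (N : ℕ∞) ≤ f.order → f ∈ A)
    (h : weightPattern N a = weightPattern N b) {f : MvPowerSeries (Fin n) K} (hfA : f ∈ A) :
    initialForm K n a f ∈ inAlgebra K n b A := by
  have hmon : ∀ α : Fin n →₀ ℕ, N ≤ α.degree →
      monomial α 1 ∈ {g | ∃ f ∈ (A : Set (MvPowerSeries (Fin n) K)), f ≠ 0 ∧
        initialForm K n b f = g} := fun α hα =>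
    ⟨_, monomial_one_mem hA hα, ne_zero_of_mem_supp (by simp [supp_monomial] : α ∈ supp K n _),
      initialForm_monomial b α 1⟩
  by_cases hlow : ∃ β ∈ supp K n (initialForm K n a f), β.degree < N
  · obtain ⟨β, hβ, hβN⟩ := hlow
    set p : MvPowerSeries (Fin n) K := ↑(truncTotal N f)
    have hinit : initialForm K n a p = truncTotal N (initialForm K n a f) :=
      initialForm_truncTotal hβ hβN
    have hsplit : initialForm K n a f = initialForm K n b p +
        (initialForm K n a f - truncTotal N (initialForm K n a f)) := by
      rw [← initialForm_eq_of_weightPattern_eq h fun α hα => (mem_supp_truncTotal_iff.mp hα).2,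
        hinit, add_sub_cancel]
    have hβp : β ∈ supp K n p :=
      supp_initialForm_subset a p (hinit ▸ mem_supp_truncTotal_iff.mpr ⟨hβ, hβN⟩)
    rw [hsplit]
    exact add_mem (subset_closedAdjoin _ ⟨p, truncTotal_mem hA hfA, ne_zero_of_mem_supp hβp, rfl⟩)
      (mem_closedAdjoin_of_le_order hmon (le_order_sub_truncTotal N _))
  · refine mem_closedAdjoin_of_le_order hmon (le_order fun α hα => ?_)
    by_contra hne
    exact hlow ⟨α, hne, by exact_mod_cast hα⟩

theorem inAlgebra_le_of_weightPattern_eq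
    (hA : ∀ f : MvPowerSeries (Fin n) K, (N : ℕ∞) ≤ f.order → f ∈ A)
    (h : weightPattern N a = weightPattern N b) : inAlgebra K n a A ≤ inAlgebra K n b A :=
  closedAdjoin_le_of_subset <| by
    rintro _ ⟨f, hfA, -, rfl⟩
    exact initialForm_mem_inAlgebra_of_weightPattern_eq hA h hfA

theorem inAlgebra_eq_of_weightPattern_eq
    (hA : ∀ f : MvPowerSeries (Fin n) K, (N : ℕ∞) ≤ f.order → f ∈ A)
    (h : weightPattern N a = weightPattern N b) : inAlgebra K n a A = inAlgebra K n b A :=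
  (inAlgebra_le_of_weightPattern_eq hA h).antisymm (inAlgebra_le_of_weightPattern_eq hA h.symm)

end

section

def fibersOn {X Y : Type*} (U : Set X) (φ : X → Y) : Set (Set X) :=
  (fun c => {x ∈ U | φ x = φ c}) '' U

variable {X Y : Type*} {U : Set X} {φ : X → Y}

theorem fibersOn_finite (h : (φ '' U).Finite) : (fibersOn U φ).Finite := by
  have : fibersOn U φ = (fun y => {x ∈ U | φ x = y}) '' (φ '' U) := by
    rw [fibersOn, Set.image_image]
  exact this ▸ h.image _

theorem nonempty_of_mem_fibersOn {σ : Set X} (hσ : σ ∈ fibersOn U φ) : σ.Nonempty := by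
  obtain ⟨c, hc, rfl⟩ := hσ
  exact ⟨c, hc, rfl⟩

theorem sUnion_fibersOn : ⋃₀ fibersOn U φ = U :=
  Set.Subset.antisymm (Set.sUnion_subset <| by rintro _ ⟨c, -, rfl⟩ x hx; exact hx.1)
    fun x hx => ⟨_, ⟨x, hx, rfl⟩, hx, rfl⟩

theorem pairwise_disjoint_fibersOn : (fibersOn U φ).Pairwise fun σ τ => Disjoint σ τ := by
  rintro _ ⟨c, -, rfl⟩ _ ⟨d, -, rfl⟩ hne
  exact Set.disjoint_left.mpr fun x hxc hxd =>
    hne (congrArg (fun y => {x ∈ U | φ x = y}) (hxc.2.symm.trans hxd.2))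

end

instance (N : ℕ) : Finite {α : Fin n →₀ ℕ // α.degree < N} :=
  (Finsupp.finite_of_degree_lt N).to_subtype

theorem weightPattern_smul {N : ℕ} {t : ℝ} (ht : 0 < t) (a : Fin n → ℝ) :
    weightPattern N (t • a) = weightPattern N a := by
  ext α β
  simp only [weightPattern, weight_smul, mul_le_mul_iff_right₀ ht]

theorem convex_setOf_weightPattern_eq (N : ℕ) (c : Fin n → ℝ) :
    Convex ℝ {a : Fin n → ℝ | (∀ i, 0 < a i) ∧ weightPattern N a = weightPattern N c} := by
  have hpair : ∀ α β : {α : Fin n →₀ ℕ // α.degree < N},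
      Convex ℝ {a | weightPattern N a α β ↔ weightPattern N c α β} := by
    intro α β
    by_cases hc : weightPattern N c α β
    · have hset : {a | weightPattern N a α β ↔ weightPattern N c α β} =
          {a | weight n a α - weight n a β ≤ 0} :=
        Set.ext fun a => (iff_true_right hc).trans sub_nonpos.symm
      exact hset ▸ convex_halfSpace_le (isLinearMap_weight_sub α.1 β.1) 0
    · have hset : {a | weightPattern N a α β ↔ weightPattern N c α β} =
          {a | weight n a β - weight n a α < 0} :=
        Set.ext fun a => (iff_false_right hc).trans (not_le.trans sub_neg.symm)
      exact hset ▸ convex_halfSpace_lt (isLinearMap_weight_sub β.1 α.1) 0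
  have hpos : Convex ℝ {a : Fin n → ℝ | ∀ i, 0 < a i} := by
    simpa [Set.pi] using convex_pi (s := Set.univ) fun (i : Fin n) _ => convex_Ioi (0 : ℝ)
  convert hpos.inter (convex_iInter fun α => convex_iInter fun β => hpair α β) using 1
  ext a
  simp [funext_iff]

end

theorem standard_fan
    (r : (Fin n →₀ ℕ) → (Fin n →₀ ℕ) → Prop) (hr : IsWellOrder (Fin n →₀ ℕ) r)
    (s : ℕ) (f : Fin s → MvPowerSeries (Fin n) K)
    (A : Subalgebra K (MvPowerSeries (Fin n) K)) (hA : A = closedAdjoin K n (Set.range f))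
    (hlen : FiniteColength K n A) :
    ∃ P : Set (Set (Fin n → ℝ)), P.Finite ∧
      (∀ σ ∈ P, σ.Nonempty) ∧
      (⋃₀ P = {a : Fin n → ℝ | ∀ i, 0 < a i}) ∧
      (P.Pairwise fun σ τ => Disjoint σ τ) ∧
      ∀ σ ∈ P, Convex ℝ σ ∧
        (∀ b ∈ σ, ∀ t : ℝ, 0 < t → t • b ∈ σ) ∧
        ∀ a ∈ σ, ∀ b ∈ σ,
          expSet K n r a (A : Set (MvPowerSeries (Fin n) K)) =
            expSet K n r b (A : Set (MvPowerSeries (Fin n) K)) ∧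
          inAlgebra K n a (A : Set (MvPowerSeries (Fin n) K)) =
            inAlgebra K n b (A : Set (MvPowerSeries (Fin n) K)) := by
  have := hr
  subst hA
  obtain ⟨N, hN⟩ := exists_forall_le_order_mem_closedAdjoin hlen
  refine ⟨fibersOn {a | ∀ i, 0 < a i} (weightPattern N), fibersOn_finite (Set.toFinite _),
    fun σ => nonempty_of_mem_fibersOn, sUnion_fibersOn, pairwise_disjoint_fibersOn, ?_⟩
  rintro _ ⟨c, -, rfl⟩
  refine ⟨convex_setOf_weightPattern_eq N c, fun b hb t ht =>
    ⟨fun i => mul_pos ht (hb.1 i), (weightPattern_smul ht b).trans hb.2⟩, fun a ha b hb => ?_⟩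
  have hab : weightPattern N a = weightPattern N b := ha.2.trans hb.2.symm
  exact ⟨expSet_eq_of_weightPattern_eq r hN ha.1 hb.1 hab, inAlgebra_eq_of_weightPattern_eq hN hab⟩

end CanonicalFan
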